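/- Let a, b > 0 with a ≠ b, and let f = η_a ∗ η_b (convolution). Then for all (x,ξ) ∈ ℝ², writing u = a + πiξ and v = b + πiξ, one has A(f,f)(x,ξ) = (1/(2(v² − u²))) · ( e^{−u|x|}/u − e^{−v|x|}/v ). -/

import Mathlib

open MeasureTheory Complex

/-- The cross-ambiguity function of `f, g : ℝ → ℂ`. -/
noncomputable def ambiguity (f g : ℝ → ℂ) (x ξ : ℝ) : ℂ :=
  ∫ t : ℝ, f (t + x / 2) * (starRingEnd ℂ) (g (t - x / 2)) *
    Complex.exp (-2 * Real.pi * Complex.I * ξ * t)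

/-- The one-sided exponential `η_a(t) = e^{-at} 1_{(0,∞)}(t)`. -/
noncomputable def eta (a : ℝ) : ℝ → ℂ :=
  fun t => if 0 < t then Complex.exp (-(a : ℂ) * t) else 0

/-- Convolution of two functions on `ℝ`. -/
noncomputable def conv (f g : ℝ → ℂ) (x : ℝ) : ℂ :=
  ∫ t : ℝ, f t * g (x - t)

lemma integrableOn_cexp_Ioi {l : ℂ} (hl : 0 < l.re) (c : ℝ) :
    IntegrableOn (fun t : ℝ => Complex.exp (-l * t)) (Set.Ioi c) := by
  refine ((exp_neg_integrableOn_Ioi c hl).mono' ?_ ?_)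
  · exact (Complex.continuous_exp.comp
      (continuous_const.mul Complex.continuous_ofReal)).aestronglyMeasurable
  · filter_upwards with t
    rw [Complex.norm_exp]
    simp [mul_comm]

lemma integral_cexp_Ioi {l : ℂ} (hl : 0 < l.re) (c : ℝ) :
    ∫ t in Set.Ioi c, Complex.exp (-l * t) = Complex.exp (-l * c) / l := by
  have hl0 : l ≠ 0 := fun h => by simp [h] at hl
  have hder : ∀ t : ℝ, HasDerivAt (fun s : ℝ => -Complex.exp (-l * s) / l)
      (Complex.exp (-l * t)) t := by
    intro t
    have h1 : HasDerivAt (fun s : ℝ => -l * (s : ℂ)) (-l) t := by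
      simpa only [mul_one, id] using ((hasDerivAt_id ((t : ℝ) : ℂ)).const_mul (-l)).comp_ofReal
    have h2 := (Complex.hasDerivAt_exp (-l * t)).comp t h1
    have h3 := (h2.neg).div_const l
    convert h3 using 1
    · rfl
    · rfl
    · field_simp
  have htend : Filter.Tendsto (fun s : ℝ => -Complex.exp (-l * s) / l) Filter.atTop (nhds 0) := by
    have hn : Filter.Tendsto (fun s : ℝ => Complex.exp (-l * s)) Filter.atTop (nhds 0) := by
      rw [tendsto_zero_iff_norm_tendsto_zero]
      have : ∀ s : ℝ, ‖Complex.exp (-l * s)‖ = Real.exp (-(l.re * s)) := by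
        intro s
        rw [Complex.norm_exp]
        simp [mul_comm]
      simp_rw [this]
      exact Real.tendsto_exp_neg_atTop_nhds_zero.comp
        (Filter.Tendsto.const_mul_atTop hl Filter.tendsto_id)
    simpa using (hn.neg).div_const l
  have := integral_Ioi_of_hasDerivAt_of_tendsto' (fun t _ => hder t)
    (integrableOn_cexp_Ioi hl c) htend
  rw [this]
  ring

lemma conv_eta_eta (a b : ℝ) (hab : a ≠ b) (s : ℝ) :
    conv (eta a) (eta b) s = if 0 < s then
      (Complex.exp (-(b : ℂ) * s) - Complex.exp (-(a : ℂ) * s)) / ((a : ℂ) - b) else 0 := by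
  have hd : ((b : ℂ) - a) ≠ 0 :=
    sub_ne_zero.2 (fun h => hab (by exact_mod_cast h.symm))
  unfold conv _root_.eta
  have hind : (fun t : ℝ => (if 0 < t then Complex.exp (-(a : ℂ) * t) else 0) *
      (if 0 < s - t then Complex.exp (-(b : ℂ) * ((s - t : ℝ) : ℂ)) else 0)) =
      Set.indicator (Set.Ioo 0 s)
        (fun t : ℝ => Complex.exp (-(b : ℂ) * s) * Complex.exp (((b : ℂ) - a) * t)) := by
    funext t
    by_cases h1 : 0 < t <;> by_cases h2 : t < s <;>
      simp [Set.indicator, Set.mem_Ioo, h1, h2, sub_pos, not_lt.2, ← Complex.exp_add] <;>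
      · push_cast
        ring_nf
  rw [hind, integral_indicator measurableSet_Ioo]
  by_cases hs : 0 < s
  · rw [if_pos hs, MeasureTheory.integral_const_mul, ← integral_Ioc_eq_integral_Ioo,
      ← intervalIntegral.integral_of_le hs.le, integral_exp_mul_complex hd]
    have hd' : ((a : ℂ) - b) ≠ 0 :=
      sub_ne_zero.2 (fun h => hab (by exact_mod_cast h))
    have key : Complex.exp (-(a : ℂ) * s) =
        Complex.exp (-(b : ℂ) * s) * Complex.exp (((b : ℂ) - a) * s) := by
      rw [← Complex.exp_add]; ring_nf
    rw [key, Complex.ofReal_zero, mul_zero, Complex.exp_zero]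
    field_simp
    ring
  · rw [if_neg hs]
    rw [Set.Ioo_eq_empty (by simpa using not_lt.1 hs)]
    simp

set_option maxHeartbeats 1000000 in
theorem ambiguity_conv_eta_eta (a b : ℝ) (ha : 0 < a) (hb : 0 < b) (hab : a ≠ b)
    (x ξ : ℝ) :
    ambiguity (conv (eta a) (eta b)) (conv (eta a) (eta b)) x ξ =
      (1 / (2 * ((((b : ℂ) + Real.pi * Complex.I * ξ)) ^ 2 -
          (((a : ℂ) + Real.pi * Complex.I * ξ)) ^ 2))) *
        (Complex.exp (-((a : ℂ) + Real.pi * Complex.I * ξ) * |x|) /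
            ((a : ℂ) + Real.pi * Complex.I * ξ) -
          Complex.exp (-((b : ℂ) + Real.pi * Complex.I * ξ) * |x|) /
            ((b : ℂ) + Real.pi * Complex.I * ξ)) := by
  have hf := conv_eta_eta a b hab
  set u : ℂ := (a : ℂ) + Real.pi * Complex.I * ξ with hu
  set v : ℂ := (b : ℂ) + Real.pi * Complex.I * ξ with hv
  have hure : u.re = a := by rw [hu]; simp
  have hvre : v.re = b := by rw [hv]; simp
  have hu0 : u ≠ 0 := by intro h; rw [h] at hure; simp at hure; linarith
  have hv0 : v ≠ 0 := by intro h; rw [h] at hvre; simp at hvre; linarith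
  have huvre : (u + v).re = a + b := by rw [Complex.add_re, hure, hvre]
  have huv0 : u + v ≠ 0 := by intro h; rw [h] at huvre; simp at huvre; linarith
  have hd : ((a : ℂ) - b) = u - v := by rw [hu, hv]; ring
  have hd0 : ((a : ℂ) - b) ≠ 0 := sub_ne_zero.2 (fun h => hab (by exact_mod_cast h))
  have huv' : u - v ≠ 0 := hd ▸ hd0
  have hsq : v ^ 2 - u ^ 2 ≠ 0 := by
    have : v ^ 2 - u ^ 2 = -((u - v) * (u + v)) := by ring
    rw [this]
    exact neg_ne_zero.2 (mul_ne_zero huv' huv0)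
  have h2v : (0 : ℝ) < (2 * v).re := by
    rw [Complex.mul_re]; simp [hvre]; linarith
  have h2u : (0 : ℝ) < (2 * u).re := by
    rw [Complex.mul_re]; simp [hure]; linarith
  have hpv : (0 : ℝ) < (u + v).re := by rw [huvre]; linarith
  clear_value u v
  set K : ℂ := Complex.exp ((u - v) * (x / 2)) + Complex.exp (-(u - v) * (x / 2)) with hK
  clear_value K
  unfold ambiguity
  have hmain : (fun t : ℝ => conv (eta a) (eta b) (t + x / 2) *
        (starRingEnd ℂ) (conv (eta a) (eta b) (t - x / 2)) *
        Complex.exp (-2 * Real.pi * Complex.I * ξ * t)) =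
      Set.indicator (Set.Ioi (|x| / 2)) (fun t : ℝ =>
        (((a : ℂ) - b)⁻¹) ^ 2 * (Complex.exp (-(2 * v) * t) + Complex.exp (-(2 * u) * t)
          - K * Complex.exp (-(u + v) * t))) := by
    funext t
    by_cases ht : |x| / 2 < t
    · rw [Set.indicator_of_mem (Set.mem_Ioi.2 ht)]
      have h1 : 0 < t + x / 2 := by have := neg_abs_le x; linarith
      have h2 : 0 < t - x / 2 := by have := le_abs_self x; linarith
      rw [hf, hf, if_pos h1, if_pos h2]
      simp only [map_div₀, map_sub, ← Complex.exp_conj, map_mul, map_neg,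
        Complex.conj_ofReal]
      have e1 : Complex.exp (-(2 * v) * (t : ℂ)) =
          Complex.exp (-(b : ℂ) * ((t + x / 2 : ℝ) : ℂ)) *
          Complex.exp (-(b : ℂ) * ((t - x / 2 : ℝ) : ℂ)) *
          Complex.exp (-2 * Real.pi * Complex.I * ξ * t) := by
        rw [← Complex.exp_add, ← Complex.exp_add]
        congr 1
        rw [hv]; push_cast; ring
      have e2 : Complex.exp (-(2 * u) * (t : ℂ)) =
          Complex.exp (-(a : ℂ) * ((t + x / 2 : ℝ) : ℂ)) *
          Complex.exp (-(a : ℂ) * ((t - x / 2 : ℝ) : ℂ)) *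
          Complex.exp (-2 * Real.pi * Complex.I * ξ * t) := by
        rw [← Complex.exp_add, ← Complex.exp_add]
        congr 1
        rw [hu]; push_cast; ring
      have e3 : Complex.exp ((u - v) * (x / 2)) * Complex.exp (-(u + v) * (t : ℂ)) =
          Complex.exp (-(b : ℂ) * ((t + x / 2 : ℝ) : ℂ)) *
          Complex.exp (-(a : ℂ) * ((t - x / 2 : ℝ) : ℂ)) *
          Complex.exp (-2 * Real.pi * Complex.I * ξ * t) := by
        rw [← Complex.exp_add, ← Complex.exp_add, ← Complex.exp_add]
        congr 1
        rw [hu, hv]; push_cast; ring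
      have e4 : Complex.exp (-(u - v) * (x / 2)) * Complex.exp (-(u + v) * (t : ℂ)) =
          Complex.exp (-(a : ℂ) * ((t + x / 2 : ℝ) : ℂ)) *
          Complex.exp (-(b : ℂ) * ((t - x / 2 : ℝ) : ℂ)) *
          Complex.exp (-2 * Real.pi * Complex.I * ξ * t) := by
        rw [← Complex.exp_add, ← Complex.exp_add, ← Complex.exp_add]
        congr 1
        rw [hu, hv]; push_cast; ring
      rw [hK, add_mul, e1, e2, e3, e4]
      field_simp
      ring
    · rw [Set.indicator_of_notMem (by simpa using ht)]
      push_neg at ht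
      rcases abs_cases x with ⟨hax, _⟩ | ⟨hax, _⟩
      · rw [hax] at ht
        rw [hf, hf, if_neg (not_lt.2 (by linarith : t - x / 2 ≤ 0))]
        simp
      · rw [hax] at ht
        rw [hf, hf, if_neg (not_lt.2 (by linarith : t + x / 2 ≤ 0))]
        simp
  rw [hmain, integral_indicator measurableSet_Ioi, MeasureTheory.integral_const_mul]
  have i1 : IntegrableOn (fun t : ℝ => Complex.exp (-(2 * v) * t)) (Set.Ioi (|x| / 2)) :=
    integrableOn_cexp_Ioi h2v _
  have i2 : IntegrableOn (fun t : ℝ => Complex.exp (-(2 * u) * t)) (Set.Ioi (|x| / 2)) :=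
    integrableOn_cexp_Ioi h2u _
  have i3 : IntegrableOn (fun t : ℝ => Complex.exp (-(u + v) * t)) (Set.Ioi (|x| / 2)) :=
    integrableOn_cexp_Ioi hpv _
  have i12 : IntegrableOn (fun t : ℝ => Complex.exp (-(2 * v) * t) +
      Complex.exp (-(2 * u) * t)) (Set.Ioi (|x| / 2)) := i1.add i2
  have i3K : IntegrableOn (fun t : ℝ => K * Complex.exp (-(u + v) * t))
      (Set.Ioi (|x| / 2)) := i3.const_mul K
  rw [MeasureTheory.integral_sub i12 i3K,
    MeasureTheory.integral_add i1 i2, MeasureTheory.integral_const_mul,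
    integral_cexp_Ioi h2v, integral_cexp_Ioi h2u, integral_cexp_Ioi hpv]
  have E1 : Complex.exp (-(2 * v) * ((|x| / 2 : ℝ) : ℂ)) = Complex.exp (-v * (|x| : ℝ)) := by
    congr 1; push_cast; ring
  have E2 : Complex.exp (-(2 * u) * ((|x| / 2 : ℝ) : ℂ)) = Complex.exp (-u * (|x| : ℝ)) := by
    congr 1; push_cast; ring
  have E3 : K * (Complex.exp (-(u + v) * ((|x| / 2 : ℝ) : ℂ)) / (u + v)) =
      (Complex.exp (-u * (|x| : ℝ)) + Complex.exp (-v * (|x| : ℝ))) / (u + v) := by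
    rw [← mul_div_assoc]
    congr 1
    rw [hK, add_mul, ← Complex.exp_add, ← Complex.exp_add]
    rcases abs_cases x with ⟨hax, _⟩ | ⟨hax, _⟩
    · rw [hax, add_comm]
      congr 2 <;> · push_cast; ring
    · rw [hax]
      congr 2 <;> · push_cast; ring
  rw [E1, E2, E3, hd]
  have h2v0 : (2 : ℂ) * v ≠ 0 := mul_ne_zero two_ne_zero hv0
  have h2u0 : (2 : ℂ) * u ≠ 0 := mul_ne_zero two_ne_zero hu0
  have h22 : ((2 : ℂ) * v) * ((2 : ℂ) * u) ≠ 0 := mul_ne_zero h2v0 h2u0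
  have hDen : ((2 : ℂ) * v) * ((2 : ℂ) * u) * (u + v) ≠ 0 := mul_ne_zero h22 huv0
  have huv2 : ((u - v) ^ 2) ≠ 0 := pow_ne_zero 2 huv'
  have hs2 : (2 : ℂ) * (v ^ 2 - u ^ 2) ≠ 0 := mul_ne_zero two_ne_zero hsq
  have huvv : (u * v) ≠ 0 := mul_ne_zero hu0 hv0
  rw [div_add_div _ _ h2v0 h2u0, div_sub_div _ _ h22 huv0, div_sub_div _ _ hu0 hv0,
    inv_pow, inv_mul_eq_div, div_div, one_div, inv_mul_eq_div, div_div,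
    div_eq_div_iff (mul_ne_zero hDen huv2) (mul_ne_zero huvv hs2)]
  ring
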